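/- arXiv:2512.15530 — 4 statements merged into one kernel-verified Lean document; each statement's English description precedes it below -/
import Mathlib

section
/- Let (X,d) be a separable metric space without isolated points and suppose φ : X → X is a Lipschitz map with ergodic Borel probability measure μ. Then for any ε > 0 and δ > 0 and μ-almost every x ∈ X there exists R ≥ 1 such that for all t ∈ ℕ with t ≥ 1, Σ_{j=0}^{t-1} Π_{i=j}^{t-1} (L_φ(φ^i(x)) + ε) < R · e^{t(λ⁺_φ(ε, μ) + δ)}. -/
/-!
Put `g = log (L_φ + ε)`. Since `φ` is `K`-Lipschitz, `L_φ` takes values in `[0, K]`, so `g` is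
bounded, and it is Borel as an infimum over the scales `1/(n+1)` of lower semicontinuous
functions. The product `∏_{i=j}^{t-1} (L_φ(φ^i x) + ε)` equals `exp (S_t g x - S_j g x)`, where `S_n`
are the Birkhoff sums. The one-sided ergodic theorem "`∫ g < c` implies `S_n g ≤ n c` for large
`n`, a.e." follows from the Katznelson–Weiss covering argument together with the zero-one law for
the invariant set where `limsup S_n g / n ≥ c`. Applied to `±g` it gives `S_n g x = n λ + o(n)`
a.e., so each of the `t` summands is `O(e^{t (λ⁺ + δ/2)})`, and the factor `t` is absorbed by
`e^{t δ / 2}`.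
-/

open MeasureTheory Filter Topology ENNReal

noncomputable section

/-- `μ` is an invariant measure of `f` and every invariant Borel set has measure `0` or `1`. -/
def IsErgodicM {α : Type*} [MeasurableSpace α] (f : α → α) (μ : Measure α) : Prop :=
  μ.map f = μ ∧ ∀ A : Set α, MeasurableSet A → f ⁻¹' A = A → μ A = 0 ∨ μ A = 1

/-- Pointwise Lipschitz constant of `ψ` at `x`, w.r.t. the distance function `dA`:
`L_ψ(x) = lim_{δ→0⁺} sup_{0 < dA x y < δ} dA (ψ x) (ψ y) / dA x y`. -/
def ptLipD {A : Type*} (dA : A → A → ℝ) (ψ : A → A) (x : A) : ℝ :=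
  ⨅ δ : {r : ℝ // 0 < r},
    sSup ((fun y => dA (ψ x) (ψ y) / dA x y) '' {y | 0 < dA x y ∧ dA x y < δ.1})

/-- Metric spatial Lyapunov exponent `λ_ψ(ε, μ) = ∫ log (L_ψ(x) + ε) dμ(x)`. -/
def spatialLyapD {A : Type*} [MeasurableSpace A] (dA : A → A → ℝ) (ψ : A → A) (ε : ℝ)
    (μ : Measure A) : ℝ :=
  ∫ x, Real.log (ptLipD dA ψ x + ε) ∂μ

section BirkhoffSum

variable {α : Type*}

theorem birkhoffSum_sub_const (f : α → α) (g : α → ℝ) (a : ℝ) (n : ℕ) (x : α) :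
    birkhoffSum f (fun y => g y - a) n x = birkhoffSum f g n x - n * a := by
  simp [birkhoffSum, Finset.sum_sub_distrib]

theorem birkhoffSum_mono (f : α → α) {g g' : α → ℝ} (h : ∀ y, g y ≤ g' y) (n : ℕ) (x : α) :
    birkhoffSum f g n x ≤ birkhoffSum f g' n x :=
  Finset.sum_le_sum fun i _ => h (f^[i] x)

theorem mul_le_birkhoffSum (f : α → α) {g : α → ℝ} {a : ℝ} (h : ∀ y, a ≤ g y) (n : ℕ) (x : α) :
    n * a ≤ birkhoffSum f g n x := by
  simpa [birkhoffSum] using Finset.card_nsmul_le_sum (Finset.range n) _ a fun i _ => h (f^[i] x)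

theorem birkhoffSum_sub_birkhoffSum_eq_sum_Ico (f : α → α) (g : α → ℝ) {j t : ℕ} (hjt : j ≤ t)
    (x : α) : birkhoffSum f g t x - birkhoffSum f g j x = ∑ i ∈ Finset.Ico j t, g (f^[i] x) :=
  (Finset.sum_Ico_eq_sub _ hjt).symm

theorem abs_birkhoffSum_apply_sub_birkhoffSum_le (f : α → α) {g : α → ℝ} {M : ℝ}
    (hM : ∀ y, |g y| ≤ M) (n : ℕ) (x : α) :
    |birkhoffSum f g n (f x) - birkhoffSum f g n x| ≤ 2 * M := by
  rw [birkhoffSum_apply_sub_birkhoffSum]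
  linarith [abs_sub (g (f^[n] x)) (g x), hM (f^[n] x), hM x]

theorem neg_mul_le_birkhoffSum_of_forall_exists_nonneg {f : α → α} {h : α → ℝ} {K : ℝ} {N : ℕ}
    (hK₀ : 0 ≤ K) (hK : ∀ y, -K ≤ h y)
    (hN : ∀ y, ∃ n, 1 ≤ n ∧ n ≤ N ∧ 0 ≤ birkhoffSum f h n y) (L : ℕ) (x : α) :
    -(N * K) ≤ birkhoffSum f h L x := by
  induction L using Nat.strong_induction_on generalizing x with
  | _ L ih =>
  obtain ⟨n, hn₁, hnN, hn⟩ := hN x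
  rcases le_or_gt n L with hnL | hLn
  · obtain ⟨m, rfl⟩ := Nat.exists_eq_add_of_le hnL
    rw [birkhoffSum_add]
    linarith [ih m (by omega) (f^[n] x)]
  · have hLN : (L : ℝ) ≤ N := by exact_mod_cast (by omega : L ≤ N)
    nlinarith [mul_le_birkhoffSum f hK L x]

def birkhoffSumsLeUpTo (f : α → α) (g : α → ℝ) (c : ℝ) (N : ℕ) : Set α :=
  ⋂ n ∈ Finset.Icc 1 N, {x | birkhoffSum f g n x ≤ n * c}

theorem antitone_birkhoffSumsLeUpTo (f : α → α) (g : α → ℝ) (c : ℝ) :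
    Antitone (birkhoffSumsLeUpTo f g c) := fun N N' hNN' x hx => by
  simp only [birkhoffSumsLeUpTo, Set.mem_iInter, Finset.mem_Icc] at hx ⊢
  exact fun n hn => hx n ⟨hn.1, hn.2.trans hNN'⟩

end BirkhoffSum

theorem nonneg_of_forall_neg_le_natCast_mul {a B : ℝ} (h : ∀ L : ℕ, -B ≤ L * a) : 0 ≤ a := by
  by_contra! ha
  obtain ⟨L, hL⟩ := exists_nat_gt (B / -a)
  rw [div_lt_iff₀ (neg_pos.2 ha)] at hL
  linarith [h L]

theorem exists_le_mul_add_of_eventually_le {a : ℕ → ℝ} {c : ℝ}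
    (h : ∀ᶠ n in atTop, a n ≤ n * c) : ∃ C, ∀ n, a n ≤ n * c + C := by
  obtain ⟨N, hN⟩ := eventually_atTop.1 h
  obtain ⟨C, hC⟩ := ((Set.finite_Iio N).image fun n => a n - n * c).bddAbove
  refine ⟨max C 0, fun n => ?_⟩
  rcases lt_or_ge n N with hn | hn
  · linarith [hC (Set.mem_image_of_mem _ (Set.mem_Iio.2 hn)), le_max_left C 0]
  · linarith [hN n hn, le_max_right C 0]

theorem frequently_lt_mul_of_abs_sub_le {a b : ℕ → ℝ} {C c c' : ℝ} (hab : ∀ n, |a n - b n| ≤ C)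
    (hc : c' < c) (h : ∃ᶠ n in atTop, n * c < a n) : ∃ᶠ n in atTop, n * c' < b n := by
  have hlarge : ∀ᶠ n : ℕ in atTop, C / (c - c') < n :=
    tendsto_natCast_atTop_atTop.eventually_gt_atTop _
  refine (h.and_eventually hlarge).mono fun n ⟨hn, hnC⟩ => ?_
  rw [div_lt_iff₀ (sub_pos.2 hc)] at hnC
  linarith [abs_le.1 (hab n)]

section Ergodic

variable {α : Type*} [MeasurableSpace α] {f : α → α} {μ : Measure α} {g : α → ℝ} {M : ℝ}

theorem IsErgodicM.ergodic [IsProbabilityMeasure μ] (hf : Measurable f) (h : IsErgodicM f μ) :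
    Ergodic f μ where
  toMeasurePreserving := ⟨hf, h.1⟩
  aeconst_set s hs hfs := by
    rcases h.2 s hs hfs with h0 | h1
    · exact eventuallyConst_set.2 (Or.inr (measure_eq_zero_iff_ae_notMem.1 h0))
    · exact eventuallyConst_set.2 (Or.inl (mem_ae_iff.2 ((prob_compl_eq_zero_iff hs).2 h1)))

theorem measurableSet_setOf_frequently_atTop {p : ℕ → α → Prop}
    (hp : ∀ n, MeasurableSet {x | p n x}) : MeasurableSet {x | ∃ᶠ n in atTop, p n x} := by
  have : {x | ∃ᶠ n in atTop, p n x} = ⋂ m, ⋃ n ≥ m, {x | p n x} := by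
    ext x
    simp [frequently_atTop]
  rw [this]
  exact .iInter fun m => .iUnion fun n => .iUnion fun _ => hp n

theorem measurable_birkhoffSum (hf : Measurable f) (hg : Measurable g) (n : ℕ) :
    Measurable (birkhoffSum f g n) :=
  Finset.measurable_sum _ fun i _ => hg.comp (hf.iterate i)

theorem Measurable.integrable_of_abs_le [IsFiniteMeasure μ] (hg : Measurable g)
    (hM : ∀ x, |g x| ≤ M) :
    Integrable g μ :=
  .of_bound hg.aestronglyMeasurable M (.of_forall hM)

theorem measurableSet_birkhoffSumsLeUpTo (hf : Measurable f) (hg : Measurable g) (c : ℝ)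
    (N : ℕ) : MeasurableSet (birkhoffSumsLeUpTo f g c N) :=
  Finset.measurableSet_biInter _ fun n _ =>
    measurableSet_le (measurable_birkhoffSum hf hg n) measurable_const

theorem MeasureTheory.MeasurePreserving.integrable_birkhoffSum (hf : MeasurePreserving f μ μ)
    (hg : Integrable g μ) (n : ℕ) : Integrable (birkhoffSum f g n) μ :=
  integrable_finsetSum _ fun i _ => (hf.iterate i).integrable_comp_of_integrable hg

theorem MeasureTheory.MeasurePreserving.integral_birkhoffSum (hf : MeasurePreserving f μ μ)
    (hg : Integrable g μ) (n : ℕ) : ∫ x, birkhoffSum f g n x ∂μ = n * ∫ x, g x ∂μ := by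
  have hcomp (i : ℕ) : ∫ x, g (f^[i] x) ∂μ = ∫ x, g x ∂μ := by
    rw [← integral_map (hf.iterate i).measurable.aemeasurable
      (by rw [(hf.iterate i).map_eq]; exact hg.aestronglyMeasurable), (hf.iterate i).map_eq]
  simp only [birkhoffSum]
  rw [integral_finsetSum (f := fun i x => g (f^[i] x)) _
      fun i _ => (hf.iterate i).integrable_comp_of_integrable hg,
    Finset.sum_congr rfl fun i _ => hcomp i]
  simp

/-- Katznelson–Weiss: adding `M + |c|` to `g - c` on the set where no Birkhoff sum of length
`n ≤ N` exceeds `n c`, every point reaches a nonnegative sum within `N` steps. -/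
theorem MeasureTheory.MeasurePreserving.le_integral_add_measureReal [IsProbabilityMeasure μ]
    (hf : MeasurePreserving f μ μ) (hg : Measurable g) (hM : ∀ x, |g x| ≤ M) (c : ℝ) {N : ℕ}
    (hN : 1 ≤ N) :
    c ≤ ∫ x, g x ∂μ + (M + |c|) * μ.real (birkhoffSumsLeUpTo f g c N) := by
  set B := birkhoffSumsLeUpTo f g c N
  have hB : MeasurableSet B := measurableSet_birkhoffSumsLeUpTo hf.measurable hg c N
  set K := M + |c|
  set h : α → ℝ := fun x => g x - c + B.indicator (fun _ => K) x
  have hK₀ : 0 ≤ K := by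
    have := nonempty_of_isProbabilityMeasure μ
    linarith [(abs_nonneg _).trans (hM (Classical.arbitrary α)), abs_nonneg c]
  have hind (x : α) : 0 ≤ B.indicator (fun _ => K) x := Set.indicator_nonneg (fun _ _ => hK₀) x
  have hhK (x : α) : -K ≤ h x := by
    linarith [neg_abs_le (g x), hM x, le_abs_self c, hind x]
  have hstep (x : α) : ∃ n, 1 ≤ n ∧ n ≤ N ∧ 0 ≤ birkhoffSum f h n x := by
    by_cases hx : x ∈ B
    · refine ⟨1, le_rfl, hN, ?_⟩
      simp only [birkhoffSum_one, h, Set.indicator_of_mem hx, K]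
      linarith [neg_abs_le (g x), hM x, le_abs_self c]
    · obtain ⟨n, hn₁, hnN, hlt⟩ : ∃ n, 1 ≤ n ∧ n ≤ N ∧ n * c < birkhoffSum f g n x := by
        simpa [B, birkhoffSumsLeUpTo] using hx
      refine ⟨n, hn₁, hnN, ?_⟩
      have := birkhoffSum_mono f (g' := h) (fun y => le_add_of_nonneg_right (hind y)) n x
      rw [birkhoffSum_sub_const] at this
      linarith
  have hint : ∫ x, h x ∂μ = ∫ x, g x ∂μ - c + K * μ.real B := by
    rw [integral_add (f := fun x => g x - c) ((hg.integrable_of_abs_le hM).sub (integrable_const c))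
        ((integrable_const K).indicator hB), integral_sub (hg.integrable_of_abs_le hM)
        (integrable_const c), integral_indicator_const K hB]
    simp [mul_comm]
  have hh : Integrable h μ :=
    ((hg.integrable_of_abs_le hM).sub (integrable_const c)).add ((integrable_const K).indicator hB)
  have hbound (L : ℕ) : -(N * K) ≤ L * ∫ x, h x ∂μ := by
    obtain ⟨x, hx⟩ := exists_le_integral (hf.integrable_birkhoffSum hh L)
    rw [hf.integral_birkhoffSum hh] at hx
    exact (neg_mul_le_birkhoffSum_of_forall_exists_nonneg hK₀ hhK hstep L x).trans hx
  have := nonneg_of_forall_neg_le_natCast_mul hbound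
  linarith

theorem MeasureTheory.MeasurePreserving.le_integral_of_ae_exists_lt_birkhoffSum
    [IsProbabilityMeasure μ] (hf : MeasurePreserving f μ μ) (hg : Measurable g)
    (hM : ∀ x, |g x| ≤ M) {c : ℝ} (h : ∀ᵐ x ∂μ, ∃ n, 1 ≤ n ∧ n * c < birkhoffSum f g n x) :
    c ≤ ∫ x, g x ∂μ := by
  set B := birkhoffSumsLeUpTo f g c
  have hB_null : μ (⋂ N, B N) = 0 := by
    refine measure_mono_null (fun x hx => ?_) (ae_iff.1 h)
    simp only [B, birkhoffSumsLeUpTo, Set.mem_iInter, Finset.mem_Icc] at hx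
    simpa using fun n hn => hx n n ⟨hn, le_rfl⟩
  have htend : Tendsto (fun N => μ.real (B N)) atTop (𝓝 0) := by
    have := tendsto_measure_iInter_atTop
      (fun N => (measurableSet_birkhoffSumsLeUpTo hf.measurable hg c N).nullMeasurableSet)
      (antitone_birkhoffSumsLeUpTo f g c) ⟨0, measure_ne_top μ _⟩
    rw [hB_null] at this
    exact (ENNReal.tendsto_toReal ENNReal.zero_ne_top).comp this
  have hlim : Tendsto (fun N => ∫ x, g x ∂μ + (M + |c|) * μ.real (B N)) atTop
      (𝓝 (∫ x, g x ∂μ)) := by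
    simpa using tendsto_const_nhds.add (htend.const_mul (M + |c|))
  exact ge_of_tendsto hlim
    ((eventually_ge_atTop 1).mono fun N hN => hf.le_integral_add_measureReal hg hM c hN)

theorem Ergodic.ae_eventually_birkhoffSum_le [IsProbabilityMeasure μ] (hf : Ergodic f μ)
    (hg : Measurable g) (hM : ∀ x, |g x| ≤ M) {c : ℝ} (hc : ∫ x, g x ∂μ < c) :
    ∀ᵐ x ∂μ, ∀ᶠ n in atTop, birkhoffSum f g n x ≤ n * c := by
  -- `B` is where `limsup S_n g / n ≥ c`; it is invariant because `S_n g ∘ f - S_n g` is bounded.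
  set B := ⋂ k : ℕ, {x | ∃ᶠ n in atTop, n * (c - 1 / (k + 1)) < birkhoffSum f g n x}
  have hBm : MeasurableSet B := .iInter fun k => measurableSet_setOf_frequently_atTop fun n =>
    measurableSet_lt measurable_const (measurable_birkhoffSum hf.measurable hg n)
  have hBinv : f ⁻¹' B = B := by
    have hshift (x : α) (n : ℕ) :
        |birkhoffSum f g n (f x) - birkhoffSum f g n x| ≤ 2 * M :=
      abs_birkhoffSum_apply_sub_birkhoffSum_le f hM n x
    have hk (k : ℕ) : c - 1 / ((k + 1 : ℕ) + 1 : ℝ) > c - 1 / (k + 1) := by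
      gcongr; linarith
    ext x
    simp only [B, Set.mem_preimage, Set.mem_iInter, Set.mem_ofPred_eq]
    refine ⟨fun h k => frequently_lt_mul_of_abs_sub_le (hshift x) (hk k) (h (k + 1)),
      fun h k => frequently_lt_mul_of_abs_sub_le (C := 2 * M)
        (fun n => abs_sub_comm (birkhoffSum f g n x) _ ▸ hshift x n) (hk k) (h (k + 1))⟩
  rcases hf.prob_eq_zero_or_one hBm hBinv with hB0 | hB1
  · rw [ae_iff]
    refine measure_mono_null (fun x hx => ?_) hB0
    replace hx : ∃ᶠ n in atTop, n * c < birkhoffSum f g n x := by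
      simpa [frequently_atTop] using hx
    refine Set.mem_iInter.2 fun k => hx.mono fun n hn => lt_of_le_of_lt ?_ hn
    gcongr
    linarith [show (0 : ℝ) < 1 / (k + 1) by positivity]
  · exfalso
    obtain ⟨k, hk⟩ := exists_nat_one_div_lt (sub_pos.2 hc)
    have hB : ∀ᵐ x ∂μ, x ∈ B := mem_ae_iff.2 ((prob_compl_eq_zero_iff hBm).2 hB1)
    have := hf.le_integral_of_ae_exists_lt_birkhoffSum hg hM (c := c - 1 / (k + 1)) <| by
      filter_upwards [hB] with x hx
      exact ((Set.mem_iInter.1 hx k).and_eventually (eventually_ge_atTop 1)).exists.imp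
        fun n hn => ⟨hn.2, hn.1⟩
    linarith

theorem Ergodic.ae_eventually_le_birkhoffSum [IsProbabilityMeasure μ] (hf : Ergodic f μ)
    (hg : Measurable g) (hM : ∀ x, |g x| ≤ M) {c : ℝ} (hc : c < ∫ x, g x ∂μ) :
    ∀ᵐ x ∂μ, ∀ᶠ n in atTop, n * c ≤ birkhoffSum f g n x := by
  have := hf.ae_eventually_birkhoffSum_le hg.neg (g := -g) (fun x => by simpa using hM x)
    (c := -c) (by simp only [Pi.neg_apply, integral_neg]; linarith)
  filter_upwards [this] with x hx
  exact hx.mono fun n hn => by simp only [birkhoffSum_neg] at hn; linarith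

end Ergodic

section PointwiseLipschitz

variable {X : Type*} [MetricSpace X] {φ : X → X} {K : NNReal}

def slopeSup (φ : X → X) (δ : ℝ) (x : X) : ℝ :=
  sSup ((fun y => dist (φ x) (φ y) / dist x y) '' {y | 0 < dist x y ∧ dist x y < δ})

theorem slopeSup_nonneg (φ : X → X) (δ : ℝ) (x : X) : 0 ≤ slopeSup φ δ x :=
  Real.sSup_nonneg <| by
    rintro _ ⟨y, ⟨hy, -⟩, rfl⟩
    exact div_nonneg dist_nonneg hy.le

theorem LipschitzWith.slopes_le (hφ : LipschitzWith K φ) (δ : ℝ) (x : X) :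
    ∀ v ∈ (fun y => dist (φ x) (φ y) / dist x y) '' {y | 0 < dist x y ∧ dist x y < δ}, v ≤ K := by
  rintro _ ⟨y, ⟨hy, -⟩, rfl⟩
  exact (div_le_iff₀ hy).2 (hφ.dist_le_mul x y)

theorem LipschitzWith.bddAbove_slopes (hφ : LipschitzWith K φ) (δ : ℝ) (x : X) :
    BddAbove ((fun y => dist (φ x) (φ y) / dist x y) '' {y | 0 < dist x y ∧ dist x y < δ}) :=
  ⟨K, hφ.slopes_le δ x⟩

theorem LipschitzWith.slopeSup_le (hφ : LipschitzWith K φ) (δ : ℝ) (x : X) :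
    slopeSup φ δ x ≤ K :=
  Real.sSup_le (hφ.slopes_le δ x) K.2

theorem LipschitzWith.slopeSup_mono (hφ : LipschitzWith K φ) (x : X) :
    Monotone fun δ => slopeSup φ δ x := fun _ _ hδ =>
  Real.sSup_le (fun _ hv => le_csSup (hφ.bddAbove_slopes _ x) <| by
      obtain ⟨y, ⟨hy, hyδ⟩, rfl⟩ := hv
      exact ⟨y, ⟨hy, hyδ.trans_le hδ⟩, rfl⟩)
    (slopeSup_nonneg φ _ x)

theorem LipschitzWith.lowerSemicontinuous_slopeSup (hφ : LipschitzWith K φ) (δ : ℝ) :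
    LowerSemicontinuous (slopeSup φ δ) := by
  intro x c hc
  rcases lt_or_ge c 0 with hc₀ | hc₀
  · exact .of_forall fun z => hc₀.trans_le (slopeSup_nonneg φ δ z)
  unfold slopeSup at hc
  have hne : ((fun y => dist (φ x) (φ y) / dist x y) ''
      {y | 0 < dist x y ∧ dist x y < δ}).Nonempty := by
    by_contra hS
    rw [Set.not_nonempty_iff_eq_empty] at hS
    rw [hS, Real.sSup_empty] at hc
    linarith
  obtain ⟨_, ⟨y, ⟨hy, hyδ⟩, rfl⟩, hcy⟩ := exists_lt_of_lt_csSup hne hc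
  have hdist : Continuous fun z => dist z y := continuous_id.dist continuous_const
  have hquot : ContinuousAt (fun z => dist (φ z) (φ y) / dist z y) x :=
    ((hφ.continuous.dist continuous_const).continuousAt).div hdist.continuousAt hy.ne'
  filter_upwards [hquot.eventually_const_lt hcy, hdist.continuousAt.eventually_const_lt hy,
    hdist.continuousAt.eventually_lt_const hyδ] with z hcz hz hzδ
  exact hcz.trans_le <| le_csSup (hφ.bddAbove_slopes δ z) ⟨y, ⟨hz, hzδ⟩, rfl⟩

theorem ptLipD_nonneg (φ : X → X) (x : X) : 0 ≤ ptLipD dist φ x :=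
  Real.iInf_nonneg fun δ => slopeSup_nonneg φ δ x

theorem bddBelow_range_slopeSup {ι : Type*} (φ : X → X) (r : ι → ℝ) (x : X) :
    BddBelow (Set.range fun i => slopeSup φ (r i) x) :=
  ⟨0, by rintro _ ⟨i, rfl⟩; exact slopeSup_nonneg φ _ x⟩

theorem LipschitzWith.ptLipD_le (hφ : LipschitzWith K φ) (x : X) : ptLipD dist φ x ≤ K :=
  (ciInf_le (bddBelow_range_slopeSup φ Subtype.val x) ⟨1, one_pos⟩).trans (hφ.slopeSup_le 1 x)

theorem LipschitzWith.ptLipD_eq_iInf_nat (hφ : LipschitzWith K φ) (x : X) :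
    ptLipD dist φ x = ⨅ n : ℕ, slopeSup φ (1 / (n + 1)) x := by
  refine le_antisymm (le_ciInf fun n => ?_) (le_ciInf fun δ => ?_)
  · exact ciInf_le (bddBelow_range_slopeSup φ Subtype.val x) ⟨_, Nat.one_div_pos_of_nat⟩
  · obtain ⟨n, hn⟩ := exists_nat_one_div_lt δ.2
    exact (ciInf_le (bddBelow_range_slopeSup φ _ x) n).trans (hφ.slopeSup_mono x hn.le)

theorem LipschitzWith.measurable_ptLipD [MeasurableSpace X] [OpensMeasurableSpace X]
    (hφ : LipschitzWith K φ) : Measurable (ptLipD dist φ) := by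
  rw [funext (hφ.ptLipD_eq_iInf_nat)]
  exact .iInf fun n => (hφ.lowerSemicontinuous_slopeSup _).measurable

end PointwiseLipschitz

theorem exists_sum_exp_sub_lt {a : ℕ → ℝ} {lam δ : ℝ} (hδ : 0 < δ)
    (hup : ∀ᶠ n in atTop, a n ≤ n * (lam + δ / 4))
    (hlow : ∀ᶠ n in atTop, n * (lam - δ / 4) ≤ a n) :
    ∃ R, 1 ≤ R ∧ ∀ t : ℕ,
      ∑ j ∈ Finset.range t, Real.exp (a t - a j) < R * Real.exp (t * (max lam 0 + δ)) := by
  obtain ⟨C₁, hC₁⟩ := exists_le_mul_add_of_eventually_le hup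
  obtain ⟨C₂, hC₂⟩ := exists_le_mul_add_of_eventually_le (a := fun n => -a n)
    (c := -(lam - δ / 4)) (hlow.mono fun n hn => by linarith)
  set C := C₁ + C₂
  refine ⟨2 / δ * Real.exp C + 1, by linarith [show 0 < 2 / δ * Real.exp C by positivity],
    fun t => ?_⟩
  have hterm : ∀ j ∈ Finset.range t, Real.exp (a t - a j) ≤
      Real.exp (t * max lam 0 + t * (δ / 2) + C) := by
    intro j hj
    have hjt : (j : ℝ) ≤ t := by exact_mod_cast (Finset.mem_range.1 hj).le
    have hlam : (t - j) * lam ≤ t * max lam 0 := by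
      nlinarith [le_max_left lam 0, le_max_right lam 0, (Nat.cast_nonneg j : (0 : ℝ) ≤ j)]
    gcongr
    nlinarith [hC₁ t, hC₂ j, (Nat.cast_nonneg j : (0 : ℝ) ≤ j)]
  have ht : (t : ℝ) ≤ 2 / δ * Real.exp (t * (δ / 2)) := by
    rw [div_mul_eq_mul_div, le_div_iff₀ hδ]
    nlinarith [Real.add_one_le_exp (t * (δ / 2))]
  calc ∑ j ∈ Finset.range t, Real.exp (a t - a j)
      ≤ t * Real.exp (t * max lam 0 + t * (δ / 2) + C) := by
        simpa using Finset.sum_le_sum hterm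
    _ ≤ 2 / δ * Real.exp (t * (δ / 2)) * Real.exp (t * max lam 0 + t * (δ / 2) + C) := by
        gcongr
    _ = 2 / δ * Real.exp C * Real.exp (t * (max lam 0 + δ)) := by
        rw [mul_assoc, ← Real.exp_add, mul_assoc, ← Real.exp_add]
        ring_nf
    _ < (2 / δ * Real.exp C + 1) * Real.exp (t * (max lam 0 + δ)) := by
        nlinarith [Real.exp_pos (t * (max lam 0 + δ))]

theorem statement1_general {X : Type*} [MetricSpace X]
    [MeasurableSpace X] [BorelSpace X]
    (φ : X → X) (Kφ : NNReal) (hφ : LipschitzWith Kφ φ)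
    (μ : Measure X) [IsProbabilityMeasure μ] (herg : IsErgodicM φ μ) :
    ∀ ε > (0 : ℝ), ∀ δ > (0 : ℝ), ∀ᵐ x ∂μ, ∃ R : ℝ, 1 ≤ R ∧
      ∀ t : ℕ, 1 ≤ t →
        ∑ j ∈ Finset.range t, ∏ i ∈ Finset.Ico j t, (ptLipD dist φ (φ^[i] x) + ε) <
          R * Real.exp (t * (max (spatialLyapD dist φ ε μ) 0 + δ)) := by
  intro ε hε δ hδ
  have hφμ : Ergodic φ μ := herg.ergodic hφ.continuous.measurable
  set g : X → ℝ := fun x => Real.log (ptLipD dist φ x + ε)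
  have hpos (x : X) : 0 < ptLipD dist φ x + ε := by linarith [ptLipD_nonneg φ x]
  have hg : Measurable g := Real.measurable_log.comp (hφ.measurable_ptLipD.add_const ε)
  have hgM (x : X) : |g x| ≤ max |Real.log ε| |Real.log (Kφ + ε)| :=
    abs_le_max_abs_abs (Real.log_le_log hε (by linarith [ptLipD_nonneg φ x]))
      (Real.log_le_log (hpos x) (by linarith [hφ.ptLipD_le x]))
  have hlyap : ∫ x, g x ∂μ = spatialLyapD dist φ ε μ := rfl
  have hup := hφμ.ae_eventually_birkhoffSum_le hg hgM
    (c := spatialLyapD dist φ ε μ + δ / 4) (by linarith)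
  have hlow := hφμ.ae_eventually_le_birkhoffSum hg hgM
    (c := spatialLyapD dist φ ε μ - δ / 4) (by linarith)
  filter_upwards [hup, hlow] with x hxup hxlow
  obtain ⟨R, hR₁, hR⟩ := exists_sum_exp_sub_lt hδ hxup hxlow
  refine ⟨R, hR₁, fun t _ => ?_⟩
  have hprod : ∀ j ∈ Finset.range t, ∏ i ∈ Finset.Ico j t, (ptLipD dist φ (φ^[i] x) + ε) =
      Real.exp (birkhoffSum φ g t x - birkhoffSum φ g j x) := fun j hj => by
    rw [birkhoffSum_sub_birkhoffSum_eq_sum_Ico φ g (Finset.mem_range.1 hj).le, Real.exp_sum]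
    exact Finset.prod_congr rfl fun i _ => (Real.exp_log (hpos _)).symm
  rw [Finset.sum_congr rfl hprod]
  exact hR t

/-- For a Lipschitz self-map `φ` of a separable metric space without isolated
points with ergodic measure `μ`: for any `ε, δ > 0` and `μ`-a.e. `x` there is `R ≥ 1` with
`∑_{j=0}^{t-1} ∏_{i=j}^{t-1} (L_φ(φ^i x) + ε) < R e^{t (λ⁺_φ(ε,μ) + δ)}` for all `t ≥ 1`. -/
theorem statement1 {X : Type*} [MetricSpace X] [TopologicalSpace.SeparableSpace X]
    [MeasurableSpace X] [BorelSpace X]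
    (hX : ∀ x : X, Filter.NeBot (𝓝[≠] x))
    (φ : X → X) (Kφ : NNReal) (hφ : LipschitzWith Kφ φ)
    (μ : Measure X) [IsProbabilityMeasure μ] (herg : IsErgodicM φ μ) :
    ∀ ε > (0 : ℝ), ∀ δ > (0 : ℝ), ∀ᵐ x ∂μ, ∃ R : ℝ, 1 ≤ R ∧
      ∀ t : ℕ, 1 ≤ t →
        ∑ j ∈ Finset.range t, ∏ i ∈ Finset.Ico j t, (ptLipD dist φ (φ^[i] x) + ε) <
          R * Real.exp (t * (max (spatialLyapD dist φ ε μ) 0 + δ)) :=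
  statement1_general φ Kφ hφ μ herg
end
end

section
/- Let X be a smooth compact manifold with metric d and let φ, φ̂ ∈ Diff¹(X) be topologically conjugate by a homeomorphism g : X → X, i.e. g ∘ φ = φ̂ ∘ g. Fix a locally finite Borel reference measure ℓ on X. Let μ be a physical measure for φ with respect to ℓ, with open neighbourhood U of its support, and let ν be a Borel probability measure absolutely continuous with respect to ℓ with ν(U ∩ g(U)) = 1. Suppose φ, g and g⁻¹ are nonsingular with respect to ℓ. Then limsup_{T→∞} d_P( (1/T) Σ_{t=0}^{T-1} φ^t_*ν, (1/T) Σ_{t=0}^{T-1} φ̂^t_*ν ) ≤ d_P(μ, g_*μ). -/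
/-!
Since `ν ≪ ℓ` and `μ` is physical, `ν`-almost every `x` lies in the basin of `μ` for `φ`; since
`g⁻¹` is nonsingular, so does `g⁻¹ x`. The conjugacy carries the empirical measures of `g⁻¹ x`
under `φ` to those of `x` under `φ̂`, so `ν`-almost every `x` lies in the basin of `g_*μ` for `φ̂`.
The Cesàro average of the `φ^t_*ν` is the `ν`-average of the empirical measures, hence tends
weakly to `μ` by dominated convergence, and likewise the `φ̂`-average tends to `g_*μ`. The triangle
inequality for `d_P` then bounds the limsup by `d_P(μ, g_*μ)`.
-/

open MeasureTheory Filter Topology ENNReal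

noncomputable section

/-- Pushforward of a probability measure under a measurable map. -/
def pushPM {α β : Type*} [MeasurableSpace α] [MeasurableSpace β]
    (f : α → β) (hf : Measurable f) (ν : ProbabilityMeasure α) : ProbabilityMeasure β :=
  ⟨(ν : Measure α).map f, Measure.isProbabilityMeasure_map hf.aemeasurable⟩

/-- Cesàro average `(1/(T+1)) ∑_{t=0}^{T} s t` of a sequence of probability measures. -/
def avgPM {α : Type*} [MeasurableSpace α] (s : ℕ → ProbabilityMeasure α) (T : ℕ) :
    ProbabilityMeasure α :=
  ⟨((T + 1 : ℕ) : ℝ≥0∞)⁻¹ • ∑ t ∈ Finset.range (T + 1), (s t : Measure α), by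
    constructor
    simp only [Measure.smul_apply, Measure.finset_sum_apply, measure_univ, Finset.sum_const,
      Finset.card_range, nsmul_eq_mul, mul_one, smul_eq_mul]
    rw [ENNReal.inv_mul_cancel] <;> simp⟩

/-- The Dirac probability measure at a point. -/
def diracPM {α : Type*} [MeasurableSpace α] (x : α) : ProbabilityMeasure α :=
  ⟨Measure.dirac x, inferInstance⟩

/-- Empirical measure `(1/(T+1)) ∑_{t=0}^{T} δ_{f^t(x)}`. -/
def empMeas {α : Type*} [MeasurableSpace α] (f : α → α) (x : α) (T : ℕ) :
    ProbabilityMeasure α :=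
  avgPM (fun t => diracPM (f^[t] x)) T

/-- Basin of a probability measure: points whose empirical measures converge weakly to `μ`. -/
def mBasin {α : Type*} [TopologicalSpace α] [MeasurableSpace α] [OpensMeasurableSpace α]
    (f : α → α) (μ : ProbabilityMeasure α) : Set α :=
  {x | Tendsto (fun T : ℕ => empMeas f x T) atTop (𝓝 μ)}

/-- Support of a measure: points all of whose open neighbourhoods have positive measure. -/
def msupport {α : Type*} [TopologicalSpace α] [MeasurableSpace α] (m : Measure α) : Set α :=
  {x | ∀ u : Set α, IsOpen u → x ∈ u → m u ≠ 0}

open BoundedContinuousFunction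

lemma integral_pushPM {X Y : Type*} [MeasurableSpace X] [TopologicalSpace Y] [MeasurableSpace Y]
    [OpensMeasurableSpace Y] {h : X → Y} (hm : Measurable h) (ν : ProbabilityMeasure X)
    (f : Y →ᵇ ℝ) :
    ∫ y, f y ∂(pushPM h hm ν : Measure Y) = ∫ x, f (h x) ∂(ν : Measure X) :=
  integral_map hm.aemeasurable f.continuous.aestronglyMeasurable

section Integrals

variable {X : Type*} [TopologicalSpace X] [MeasurableSpace X] [OpensMeasurableSpace X]

lemma integral_avgPM (s : ℕ → ProbabilityMeasure X) (T : ℕ) (f : X →ᵇ ℝ) :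
    ∫ x, f x ∂(avgPM s T : Measure X)
      = ((T : ℝ) + 1)⁻¹ * ∑ t ∈ Finset.range (T + 1), ∫ x, f x ∂(s t : Measure X) := by
  change ∫ x, f x ∂(((T + 1 : ℕ) : ℝ≥0∞)⁻¹ • ∑ t ∈ Finset.range (T + 1), (s t : Measure X)) = _
  rw [integral_smul_measure, integral_finsetSum_measure (fun t _ => f.integrable _),
    ENNReal.toReal_inv, ENNReal.toReal_natCast, smul_eq_mul]
  push_cast
  rfl

lemma integral_empMeas (ψ : X → X) (x : X) (T : ℕ) (f : X →ᵇ ℝ) :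
    ∫ y, f y ∂(empMeas ψ x T : Measure X)
      = ((T : ℝ) + 1)⁻¹ * ∑ t ∈ Finset.range (T + 1), f (ψ^[t] x) := by
  rw [empMeas, integral_avgPM]
  exact congrArg _ (Finset.sum_congr rfl fun t _ =>
    integral_dirac' _ _ f.continuous.stronglyMeasurable)

lemma integral_avgPM_pushPM_iterate {ψ : X → X} (hψ : Measurable ψ) (ν : ProbabilityMeasure X)
    (T : ℕ) (f : X →ᵇ ℝ) :
    ∫ y, f y ∂(avgPM (fun t => pushPM ψ^[t] (hψ.iterate t) ν) T : Measure X)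
      = ∫ x, ∫ y, f y ∂(empMeas ψ x T : Measure X) ∂(ν : Measure X) := by
  have hint : ∀ t, Integrable (fun x => f (ψ^[t] x)) (ν : Measure X) := fun t =>
    .of_bound (f.continuous.measurable.comp (hψ.iterate t)).aestronglyMeasurable ‖f‖
      (.of_forall fun x => f.norm_coe_le_norm _)
  simp only [integral_empMeas, integral_avgPM, integral_pushPM, integral_const_mul,
    integral_finsetSum _ fun t _ => hint t]

end Integrals

lemma tendsto_avgPM_pushPM_iterate {X : Type*} [TopologicalSpace X] [MeasurableSpace X]
    [OpensMeasurableSpace X] {ψ : X → X} (hψ : Measurable ψ) {ρ ν : ProbabilityMeasure X}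
    (hae : ∀ᵐ x ∂(ν : Measure X), x ∈ mBasin ψ ρ) :
    Tendsto (fun T => avgPM (fun t => pushPM ψ^[t] (hψ.iterate t) ν) T) atTop (𝓝 ρ) := by
  rw [ProbabilityMeasure.tendsto_iff_forall_integral_tendsto]
  intro f
  simp_rw [integral_avgPM_pushPM_iterate hψ ν _ f]
  have hconst : ∫ y, f y ∂(ρ : Measure X)
      = ∫ _ : X, ∫ y, f y ∂(ρ : Measure X) ∂(ν : Measure X) := by
    simp
  rw [hconst]
  refine tendsto_integral_of_dominated_convergence (fun _ => ‖f‖) (fun T => ?_)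
    (integrable_const _) (fun T => .of_forall fun x => f.norm_integral_le_norm _) ?_
  · simp only [integral_empMeas]
    exact (measurable_const.mul (Finset.measurable_sum _ fun t _ =>
      f.continuous.measurable.comp (hψ.iterate t))).aestronglyMeasurable
  · filter_upwards [hae] with x hx
    exact ProbabilityMeasure.tendsto_iff_forall_integral_tendsto.mp hx f

lemma empMeas_semiconj {α β : Type*} [MeasurableSpace α] [MeasurableSpace β] {g : α → β}
    (hg : Measurable g) {φ : α → α} {φh : β → β} (h : Function.Semiconj g φ φh) (x : α) (T : ℕ) :
    empMeas φh (g x) T = pushPM g hg (empMeas φ x T) := by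
  apply Subtype.ext
  simp [empMeas, avgPM, pushPM, diracPM, Measure.map_finset_sum hg.aemeasurable,
    Measure.map_dirac' hg, (h.iterate_right _).eq]

lemma mem_mBasin_of_semiconj {α β : Type*} [TopologicalSpace α] [MeasurableSpace α]
    [OpensMeasurableSpace α] [TopologicalSpace β] [MeasurableSpace β] [BorelSpace β]
    {g : α → β} (hg : Continuous g) {φ : α → α} {φh : β → β} (h : Function.Semiconj g φ φh)
    {μ : ProbabilityMeasure α} {x : α} (hx : x ∈ mBasin φ μ) :
    g x ∈ mBasin φh (pushPM g hg.measurable μ) := by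
  change Tendsto (fun T => empMeas φh (g x) T) atTop _
  simp only [empMeas_semiconj hg.measurable h]
  exact ((ProbabilityMeasure.continuous_map hg).tendsto μ).comp hx

section WeakMetric

variable {α : Type*} [TopologicalSpace α] {d : α → α → ℝ}

lemma tendsto_dist_zero_of_tendsto (hnonneg : ∀ a b, 0 ≤ d a b)
    (htri : ∀ a b c, d a c ≤ d a b + d b c)
    (hopen : ∀ s : Set α, (∀ a ∈ s, ∃ ε > (0 : ℝ), ∀ b, d a b < ε → b ∈ s) → IsOpen s)
    {ι : Type*} {l : Filter ι} {u : ι → α} {ρ : α} (hρ : d ρ ρ = 0) (hu : Tendsto u l (𝓝 ρ)) :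
    Tendsto (fun i => d ρ (u i)) l (𝓝 0) := by
  have hball : ∀ ε > 0, IsOpen {b | d ρ b < ε} := fun ε _ =>
    hopen _ fun c hc => ⟨ε - d ρ c, sub_pos.2 hc, fun b hb => by
      change d ρ b < ε
      linarith [htri ρ c b]⟩
  refine tendsto_order.2 ⟨fun a ha => .of_forall fun i => ha.trans_le (hnonneg _ _),
    fun ε hε => hu ((hball ε hε).mem_nhds ?_)⟩
  change d ρ ρ < ε
  rwa [hρ]

lemma limsup_dist_le_of_tendsto (hsymm : ∀ a b, d a b = d b a)
    (htri : ∀ a b c, d a c ≤ d a b + d b c) (hzero : ∀ a, d a a = 0)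
    (hopen : ∀ s : Set α, (∀ a ∈ s, ∃ ε > (0 : ℝ), ∀ b, d a b < ε → b ∈ s) → IsOpen s)
    {ι : Type*} {l : Filter ι} [l.NeBot] {u v : ι → α} {ρ σ : α}
    (hu : Tendsto u l (𝓝 ρ)) (hv : Tendsto v l (𝓝 σ)) :
    limsup (fun i => d (u i) (v i)) l ≤ d ρ σ := by
  have hnonneg : ∀ a b, 0 ≤ d a b := fun a b => by linarith [htri a b a, hsymm a b, hzero a]
  have hbound : Tendsto (fun i => d ρ (u i) + d ρ σ + d σ (v i)) l (𝓝 (d ρ σ)) := by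
    simpa using ((tendsto_dist_zero_of_tendsto hnonneg htri hopen (hzero ρ) hu).add
      tendsto_const_nhds).add (tendsto_dist_zero_of_tendsto hnonneg htri hopen
        (hzero σ) hv)
  calc limsup (fun i => d (u i) (v i)) l
      ≤ limsup (fun i => d ρ (u i) + d ρ σ + d σ (v i)) l :=
        limsup_le_limsup
          (.of_forall fun i => by
            linarith [htri (u i) ρ (v i), htri ρ σ (v i), hsymm (u i) ρ])
          (isCoboundedUnder_le_of_le l fun i => hnonneg _ _) hbound.isBoundedUnder_le
    _ = d ρ σ := hbound.limsup_eq

end WeakMetric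

theorem statement4_general
    {X : Type*} [MetricSpace X] [MeasurableSpace X] [BorelSpace X]
    -- `φ, φ̂ ∈ Diff¹(X)`, conjugate by the homeomorphism `g`:
    (φ φh g : X ≃ₜ X)
    (hconj : ∀ x, g (φ x) = φh (g x))
    -- `dP` is a metric on `P(X)` metrizing the weak topology:
    (dP : ProbabilityMeasure X → ProbabilityMeasure X → ℝ)
    (hdP_symm : ∀ a b, dP a b = dP b a)
    (hdP_tri : ∀ a b c, dP a c ≤ dP a b + dP b c)
    (hdP_eq : ∀ a b, dP a b = 0 ↔ a = b)
    (hdP_top : ∀ s : Set (ProbabilityMeasure X),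
      IsOpen s ↔ ∀ a ∈ s, ∃ ε > (0 : ℝ), ∀ b, dP a b < ε → b ∈ s)
    -- locally finite Borel reference measure:
    (ℓ : Measure X)
    -- `μ` is a physical measure for `φ`, with open neighbourhood `U` of its support:
    (μ : ProbabilityMeasure X) (U : Set X)
    (hUopen : IsOpen U)
    (hphys : ℓ (U \ mBasin ⇑φ μ) = 0)
    -- `ν ≪ ℓ` with `ν(U ∩ g(U)) = 1`:
    (ν : ProbabilityMeasure X)
    (hν : (ν : Measure X) ≪ ℓ) (hνU : (ν : Measure X) (U ∩ ⇑g '' U) = 1)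
    -- `φ`, `g` and `g⁻¹` are nonsingular w.r.t. `ℓ`:
    (hnsginv : ℓ.map ⇑g.symm ≪ ℓ) :
    Filter.limsup
      (fun T : ℕ => dP
        (avgPM (fun t => pushPM (⇑φ)^[t] (φ.continuous.measurable.iterate t) ν) T)
        (avgPM (fun t => pushPM (⇑φh)^[t] (φh.continuous.measurable.iterate t) ν) T))
      atTop
      ≤ dP μ (pushPM ⇑g g.continuous.measurable μ) := by
  have hbasin : ∀ᵐ x ∂ℓ, x ∈ U → x ∈ mBasin φ μ :=
    ae_iff.2 (measure_mono_null (fun x hx => Classical.not_imp.1 hx) hphys)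
  have hbasin_symm : ∀ᵐ x ∂ℓ, x ∈ g '' U → g.symm x ∈ mBasin φ μ := by
    rw [g.image_eq_preimage_symm]
    exact (Measure.QuasiMeasurePreserving.mk g.symm.continuous.measurable hnsginv).ae hbasin
  have hUgU : ∀ᵐ x ∂(ν : Measure X), x ∈ U ∩ g '' U :=
    (mem_ae_iff_prob_eq_one (hUopen.inter (g.isOpenMap U hUopen)).measurableSet).2 hνU
  refine limsup_dist_le_of_tendsto hdP_symm hdP_tri (fun a => (hdP_eq a a).2 rfl)
    (fun s => (hdP_top s).2) (tendsto_avgPM_pushPM_iterate φ.continuous.measurable ?_)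
    (tendsto_avgPM_pushPM_iterate φh.continuous.measurable ?_)
  · filter_upwards [hν.ae_le hbasin, hUgU] with x hx hxU using hx hxU.1
  · filter_upwards [hν.ae_le hbasin_symm, hUgU] with x hx hxU
    simpa using mem_mBasin_of_semiconj g.continuous hconj (hx hxU.2)

/-- For topologically conjugate `C¹` diffeomorphisms `φ, φ̂` of a smooth compact
manifold, `μ` a physical measure for `φ` (w.r.t. the locally finite reference measure `ℓ`, with
open neighbourhood `U` of its support), and `ν ≪ ℓ` with `ν(U ∩ g(U)) = 1`, the Cesàro averages
of the transported measures stay asymptotically within `dP(μ, g_*μ)` of each other. -/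
theorem statement4 {E : Type*} [NormedAddCommGroup E] [NormedSpace ℝ E]
    {H : Type*} [TopologicalSpace H] (I : ModelWithCorners ℝ E H)
    {X : Type*} [MetricSpace X] [CompactSpace X] [ChartedSpace H X]
    [IsManifold I (⊤ : ℕ∞) X] [MeasurableSpace X] [BorelSpace X]
    -- `φ, φ̂ ∈ Diff¹(X)`, conjugate by the homeomorphism `g`:
    (φ φh g : X ≃ₜ X)
    (hφ : ContMDiff I I 1 ⇑φ) (hφinv : ContMDiff I I 1 ⇑φ.symm)
    (hφh : ContMDiff I I 1 ⇑φh) (hφhinv : ContMDiff I I 1 ⇑φh.symm)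
    (hconj : ∀ x, g (φ x) = φh (g x))
    -- `dP` is a metric on `P(X)` metrizing the weak topology:
    (dP : ProbabilityMeasure X → ProbabilityMeasure X → ℝ)
    (hdP_symm : ∀ a b, dP a b = dP b a)
    (hdP_tri : ∀ a b c, dP a c ≤ dP a b + dP b c)
    (hdP_eq : ∀ a b, dP a b = 0 ↔ a = b)
    (hdP_top : ∀ s : Set (ProbabilityMeasure X),
      IsOpen s ↔ ∀ a ∈ s, ∃ ε > (0 : ℝ), ∀ b, dP a b < ε → b ∈ s)
    -- locally finite Borel reference measure:
    (ℓ : Measure X) [IsLocallyFiniteMeasure ℓ]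
    -- `μ` is a physical measure for `φ`, with open neighbourhood `U` of its support:
    (μ : ProbabilityMeasure X) (U : Set X)
    (hUopen : IsOpen U) (hUsupp : msupport (μ : Measure X) ⊆ U)
    (hcompact : IsCompact (msupport (μ : Measure X)))
    (hphys : ℓ (U \ mBasin ⇑φ μ) = 0)
    -- `ν ≪ ℓ` with `ν(U ∩ g(U)) = 1`:
    (ν : ProbabilityMeasure X)
    (hν : (ν : Measure X) ≪ ℓ) (hνU : (ν : Measure X) (U ∩ ⇑g '' U) = 1)
    -- `φ`, `g` and `g⁻¹` are nonsingular w.r.t. `ℓ`: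
    (hnsφ : ℓ.map ⇑φ ≪ ℓ) (hnsg : ℓ.map ⇑g ≪ ℓ) (hnsginv : ℓ.map ⇑g.symm ≪ ℓ) :
    Filter.limsup
      (fun T : ℕ => dP
        (avgPM (fun t => pushPM (⇑φ)^[t] (φ.continuous.measurable.iterate t) ν) T)
        (avgPM (fun t => pushPM (⇑φh)^[t] (φh.continuous.measurable.iterate t) ν) T))
      atTop
      ≤ dP μ (pushPM ⇑g g.continuous.measurable μ) :=
  statement4_general φ φh g hconj dP hdP_symm hdP_tri hdP_eq hdP_top ℓ μ U hUopen hphys ν hν hνU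
    hnsginv

end
end

section
/- Let (X,d) be a compact metric space and let φ, φ̂ : X → X be homeomorphisms that are topologically conjugate by a homeomorphism g : X → X, i.e. g ∘ φ = φ̂ ∘ g. Let μ be a mixing Borel probability measure for φ, and let ν be a Borel probability measure absolutely continuous with respect to μ. Suppose g⁻¹ is nonsingular with respect to μ, i.e. (g⁻¹)_*μ ≪ μ. Then limsup_{t→∞} d_P(φ^t_*ν, φ̂^t_*ν) ≤ d_P(μ, g_*μ). -/
open MeasureTheory Filter Topology ENNReal

noncomputable section

/-- `μ` is an invariant mixing measure of `f`. -/
def IsMixingM {α : Type*} [MeasurableSpace α] (f : α → α) (μ : Measure α) : Prop :=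
  μ.map f = μ ∧ ∀ A B : Set α, MeasurableSet A → MeasurableSet B →
    Tendsto (fun t : ℕ => μ (f^[t] ⁻¹' A ∩ B)) atTop (𝓝 (μ A * μ B))

/-!
Mixing gives `∫ (h ∘ φ^t) f dμ → ∫ h dμ · ∫ f dμ`, first for indicators `h`, `f` and then, since
both sides are uniformly Lipschitz in `L¹`, for bounded `h` and integrable `f`. Taking
`f = dν/dμ` shows `φ^t_* ν → μ` weakly. Conjugacy gives `φ̂^t_* ν = g_* φ^t_* (g⁻¹_* ν)` with
`g⁻¹_* ν ≪ μ` by nonsingularity, so `φ̂^t_* ν → g_* μ`, and the triangle inequality for `d_P`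
bounds the limsup by `d_P(μ, g_* μ)`.
-/

namespace MeasureTheory

variable {α ι : Type*} [MeasurableSpace α] {μ : Measure α}

theorem Integrable.tendsto_of_tendsto_indicator {l : Filter ι} {F : ι → (α → ℝ) → ℝ}
    {G : (α → ℝ) → ℝ} {C : ℝ}
    (hF_add : ∀ i ⦃f g : α → ℝ⦄, Integrable f μ → Integrable g μ → F i (f + g) = F i f + F i g)
    (hG_add : ∀ ⦃f g : α → ℝ⦄, Integrable f μ → Integrable g μ → G (f + g) = G f + G g)
    (hF_lip : ∀ i ⦃f g : α → ℝ⦄, Integrable f μ → Integrable g μ →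
      dist (F i f) (F i g) ≤ C * ∫ x, dist (f x) (g x) ∂μ)
    (hG_lip : ∀ ⦃f g : α → ℝ⦄, Integrable f μ → Integrable g μ →
      dist (G f) (G g) ≤ C * ∫ x, dist (f x) (g x) ∂μ)
    (h_ind : ∀ (c : ℝ) ⦃s : Set α⦄, MeasurableSet s → μ s < ∞ →
      Tendsto (fun i ↦ F i (s.indicator fun _ ↦ c)) l (𝓝 (G (s.indicator fun _ ↦ c))))
    ⦃f : α → ℝ⦄ (hf : Integrable f μ) :
    Tendsto (fun i ↦ F i f) l (𝓝 (G f)) := by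
  refine Integrable.induction (P := fun f ↦ Tendsto (fun i ↦ F i f) l (𝓝 (G f)))
    h_ind ?_ ?_ ?_ hf
  · intro f g _ hf hg hf_lim hg_lim
    simpa only [hF_add _ hf hg, hG_add hf hg] using hf_lim.add hg_lim
  · refine IsSeqClosed.isClosed fun {u f} hu hlim ↦ ?_
    have hdist : Tendsto (fun n ↦ C * dist f (u n)) atTop (𝓝 0) := by
      simpa using tendsto_const_nhds.mul (tendsto_iff_dist_tendsto_zero.mp hlim |>.congr
        fun n ↦ dist_comm (u n) f)
    have hF_unif : TendstoUniformly (fun n i ↦ F i (u n)) (fun i ↦ F i f) atTop := by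
      refine Metric.tendstoUniformly_iff.mpr fun ε hε ↦ ?_
      filter_upwards [(tendsto_order.mp hdist).2 ε hε] with n hn i
      refine (hF_lip i (L1.integrable_coeFn f) (L1.integrable_coeFn (u n))).trans_lt ?_
      rwa [← L1.dist_eq_integral_dist]
    have hG_lim : Tendsto (fun n ↦ G (u n)) atTop (𝓝 (G f)) := by
      refine tendsto_iff_dist_tendsto_zero.mpr (squeeze_zero (fun _ ↦ dist_nonneg) (fun n ↦ ?_)
        hdist)
      rw [dist_comm, L1.dist_eq_integral_dist]
      exact hG_lip (L1.integrable_coeFn f) (L1.integrable_coeFn (u n))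
    exact hF_unif.tendsto_of_eventually_tendsto (Eventually.of_forall hu) hG_lim
  · intro f g hfg hf hf_lim
    have h_zero : ∫ x, dist (f x) (g x) ∂μ = 0 :=
      integral_eq_zero_of_ae (hfg.mono fun x hx ↦ by simp [hx])
    have hg := hf.congr hfg
    have hF_eq : ∀ i, F i f = F i g := fun i ↦
      dist_le_zero.mp (by simpa [h_zero] using hF_lip i hf hg)
    have hG_eq : G f = G g := dist_le_zero.mp (by simpa [h_zero] using hG_lip hf hg)
    simpa only [hF_eq, hG_eq] using hf_lim

theorem MeasurePreserving.integral_comp_of_aestronglyMeasurable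
    {β : Type*} [MeasurableSpace β] {ν : Measure β}
    {f : α → β} (hf : MeasurePreserving f μ ν) {g : β → ℝ} (hg : AEStronglyMeasurable g ν) :
    ∫ x, g (f x) ∂μ = ∫ y, g y ∂ν := by
  rw [← integral_map hf.aemeasurable (hf.map_eq ▸ hg), hf.map_eq]

theorem dist_integral_mul_le {k f g : α → ℝ} {C : ℝ} (hk : AEStronglyMeasurable k μ) (hkC : ∀ᵐ x ∂μ, ‖k x‖ ≤ C)
    (hf : Integrable f μ) (hg : Integrable g μ) :
    dist (∫ x, k x * f x ∂μ) (∫ x, k x * g x ∂μ) ≤ C * ∫ x, dist (f x) (g x) ∂μ := by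
  rw [dist_eq_norm, ← integral_sub (hf.bdd_mul hk hkC) (hg.bdd_mul hk hkC),
    ← integral_const_mul]
  refine norm_integral_le_of_norm_le ((hf.sub hg).norm.const_mul C) ?_
  filter_upwards [hkC] with x hx
  rw [← mul_sub, norm_mul, dist_eq_norm]
  exact mul_le_mul_of_nonneg_right hx (norm_nonneg _)

end MeasureTheory

namespace IsMixingM

variable {X : Type*} [MeasurableSpace X] {φ : X → X} {μ : Measure X}

theorem measurePreserving_iterate (hmix : IsMixingM φ μ) (hφ : Measurable φ) (t : ℕ) :
    MeasurePreserving φ^[t] μ μ :=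
  (MeasurePreserving.mk hφ hmix.1).iterate t

variable [IsProbabilityMeasure μ]

theorem tendsto_measureReal (hmix : IsMixingM φ μ) {A B : Set X} (hA : MeasurableSet A)
    (hB : MeasurableSet B) :
    Tendsto (fun t ↦ μ.real (φ^[t] ⁻¹' A ∩ B)) atTop (𝓝 (μ.real A * μ.real B)) := by
  simpa only [measureReal_def, ENNReal.toReal_mul, Function.comp_def] using
    (ENNReal.tendsto_toReal (mul_ne_top (measure_ne_top μ A) (measure_ne_top μ B))).comp
      (hmix.2 A B hA hB)

theorem tendsto_setIntegral_comp_iterate (hmix : IsMixingM φ μ) (hφ : Measurable φ)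
    {B : Set X} (hB : MeasurableSet B) {h : X → ℝ} (hh : Integrable h μ) :
    Tendsto (fun t ↦ ∫ x in B, h (φ^[t] x) ∂μ) atTop (𝓝 ((∫ x, h x ∂μ) * μ.real B)) := by
  have hmp := hmix.measurePreserving_iterate hφ
  have hcomp : ∀ t {f : X → ℝ}, Integrable f μ → Integrable (fun x ↦ f (φ^[t] x)) μ :=
    fun t f hf ↦ (hmp t).integrable_comp_of_integrable hf
  have hB_le : ∀ᵐ _ ∂μ, ‖μ.real B‖ ≤ 1 := .of_forall fun _ ↦ by
    rw [Real.norm_of_nonneg measureReal_nonneg]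
    exact measureReal_le_one
  rw [mul_comm, ← integral_const_mul]
  refine Integrable.tendsto_of_tendsto_indicator (C := 1)
    (F := fun t k ↦ ∫ x in B, k (φ^[t] x) ∂μ) (G := fun k ↦ ∫ x, μ.real B * k x ∂μ)
    (fun t f g hf hg ↦ integral_add (hcomp t hf).restrict (hcomp t hg).restrict)
    (fun f g hf hg ↦ ?_) (fun t f g hf hg ↦ ?_)
    (fun f g hf hg ↦ dist_integral_mul_le aestronglyMeasurable_const hB_le hf hg)
    (fun c A hA _ ↦ ?_) hh
  · simp only [Pi.add_apply, mul_add]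
    exact integral_add (hf.const_mul _) (hg.const_mul _)
  · calc dist (∫ x in B, f (φ^[t] x) ∂μ) (∫ x in B, g (φ^[t] x) ∂μ)
        ≤ ∫ x in B, dist (f (φ^[t] x)) (g (φ^[t] x)) ∂μ := by
          rw [dist_eq_norm, ← integral_sub (hcomp t hf).restrict (hcomp t hg).restrict]
          exact norm_integral_le_integral_norm _
      _ ≤ ∫ x, dist (f (φ^[t] x)) (g (φ^[t] x)) ∂μ :=
          setIntegral_le_integral (((hcomp t hf).sub (hcomp t hg)).norm)
            (.of_forall fun _ ↦ dist_nonneg)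
      _ = 1 * ∫ x, dist (f x) (g x) ∂μ := by
          rw [one_mul, (hmp t).integral_comp_of_aestronglyMeasurable
            (g := fun x ↦ dist (f x) (g x)) (hf.aestronglyMeasurable.dist hg.aestronglyMeasurable)]
  · have h_ind : ∀ t, ∫ x in B, A.indicator (fun _ ↦ c) (φ^[t] x) ∂μ
        = μ.real (φ^[t] ⁻¹' A ∩ B) * c := fun t ↦ by
      simp_rw [← Set.indicator_comp_right, Function.comp_def]
      rw [setIntegral_indicator (hφ.iterate t hA), setIntegral_const, smul_eq_mul,
        Set.inter_comm]
    simp only [h_ind, integral_const_mul, integral_indicator_const c hA, smul_eq_mul]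
    rw [← mul_assoc, mul_comm (μ.real B)]
    exact (hmix.tendsto_measureReal hA hB).mul_const c

theorem tendsto_integral_comp_iterate_mul (hmix : IsMixingM φ μ) (hφ : Measurable φ)
    {h : X → ℝ} (hh : Measurable h) {C : ℝ} (hC : ∀ x, ‖h x‖ ≤ C) {f : X → ℝ}
    (hf : Integrable f μ) :
    Tendsto (fun t ↦ ∫ x, h (φ^[t] x) * f x ∂μ) atTop
      (𝓝 ((∫ x, h x ∂μ) * ∫ x, f x ∂μ)) := by
  have hh_int : Integrable h μ := .of_bound hh.aestronglyMeasurable C (.of_forall hC)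
  have hk : ∀ t, AEStronglyMeasurable (fun x ↦ h (φ^[t] x)) μ :=
    fun t ↦ (hh.comp (hφ.iterate t)).aestronglyMeasurable
  have hkC : ∀ t, ∀ᵐ x ∂μ, ‖h (φ^[t] x)‖ ≤ C := fun t ↦ .of_forall fun x ↦ hC _
  have hmean : ∀ᵐ _ ∂μ, ‖∫ x, h x ∂μ‖ ≤ C := .of_forall fun _ ↦ by
    simpa using norm_integral_le_of_norm_le_const (μ := μ) (.of_forall hC)
  rw [← integral_const_mul]
  refine Integrable.tendsto_of_tendsto_indicator (C := C)
    (F := fun t f ↦ ∫ x, h (φ^[t] x) * f x ∂μ) (G := fun f ↦ ∫ x, (∫ y, h y ∂μ) * f x ∂μ)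
    (fun t f g hf hg ↦ ?_) (fun f g hf hg ↦ ?_)
    (fun t f g hf hg ↦ dist_integral_mul_le (hk t) (hkC t) hf hg)
    (fun f g hf hg ↦ dist_integral_mul_le aestronglyMeasurable_const hmean hf hg)
    (fun c s hs _ ↦ ?_) hf
  · simp only [Pi.add_apply, mul_add]
    exact integral_add (hf.bdd_mul (hk t) (hkC t)) (hg.bdd_mul (hk t) (hkC t))
  · simp only [Pi.add_apply, mul_add]
    exact integral_add (hf.const_mul _) (hg.const_mul _)
  · have h_ind : ∀ t, ∫ x, h (φ^[t] x) * s.indicator (fun _ ↦ c) x ∂μ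
        = (∫ x in s, h (φ^[t] x) ∂μ) * c := fun t ↦ by
      rw [← integral_mul_const, ← integral_indicator hs]
      congr 1 with x
      by_cases hx : x ∈ s <;> simp [hx]
    simp only [h_ind, integral_const_mul, integral_indicator_const c hs, smul_eq_mul, ← mul_assoc]
    exact (hmix.tendsto_setIntegral_comp_iterate hφ hs hh_int).mul_const c

end IsMixingM

theorem IsMixingM.tendsto_pushPM_iterate {X : Type*} [TopologicalSpace X] [MeasurableSpace X]
    [OpensMeasurableSpace X] {φ : X → X} {μ ρ : ProbabilityMeasure X}
    (hmix : IsMixingM φ μ) (hφ : Measurable φ) (hρ : (ρ : Measure X) ≪ μ) :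
    Tendsto (fun t ↦ pushPM φ^[t] (hφ.iterate t) ρ) atTop (𝓝 μ) := by
  rw [ProbabilityMeasure.tendsto_iff_forall_integral_tendsto]
  intro f
  have h_density : ∀ t, ∫ x, f x ∂(pushPM φ^[t] (hφ.iterate t) ρ : Measure X)
      = ∫ x, f (φ^[t] x) * ((ρ : Measure X).rnDeriv μ x).toReal ∂μ := fun t ↦ by
    simp only [pushPM, ProbabilityMeasure.coe_mk]
    rw [integral_map (hφ.iterate t).aemeasurable f.continuous.aestronglyMeasurable,
      ← integral_toReal_rnDeriv_mul hρ]
    simp only [mul_comm]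
  simpa only [h_density, Measure.integral_toReal_rnDeriv hρ, probReal_univ, mul_one] using
    hmix.tendsto_integral_comp_iterate_mul hφ f.continuous.measurable f.norm_coe_le_norm
      (Measure.integrable_toReal_rnDeriv (μ := ρ))

theorem MeasureTheory.Measure.map_iterate_eq_of_semiconj {X Y : Type*} [MeasurableSpace X]
    [MeasurableSpace Y] {φ : X → X} {ψ : Y → Y} {g : X → Y} {g' : Y → X} (hφ : Measurable φ)
    (hg : Measurable g) (hg' : Measurable g') (hgg' : Function.RightInverse g' g)
    (hconj : Function.Semiconj g φ ψ) (ν : Measure Y) (t : ℕ) :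
    ν.map ψ^[t] = ((ν.map g').map φ^[t]).map g := by
  rw [Measure.map_map (hφ.iterate t) hg', Measure.map_map hg ((hφ.iterate t).comp hg')]
  congr 1 with y
  simp [(hconj.iterate_right t).eq, hgg' y]

theorem IsMixingM.tendsto_pushPM_iterate_of_semiconj {X : Type*} [TopologicalSpace X]
    [MeasurableSpace X] [BorelSpace X] {φ ψ : X → X} {g : X ≃ₜ X} {μ ν : ProbabilityMeasure X}
    (hmix : IsMixingM φ μ) (hφ : Measurable φ) (hψ : Measurable ψ)
    (hconj : Function.Semiconj g φ ψ) (hν : (ν : Measure X) ≪ μ)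
    (hg : (μ : Measure X).map g.symm ≪ μ) :
    Tendsto (fun t ↦ pushPM ψ^[t] (hψ.iterate t) ν) atTop
      (𝓝 (pushPM g g.continuous.measurable μ)) := by
  set ρ := pushPM g.symm g.symm.continuous.measurable ν
  have hρ : (ρ : Measure X) ≪ μ := (hν.map g.symm.continuous.measurable).trans hg
  refine (ProbabilityMeasure.tendsto_map_of_tendsto_of_continuous _ _
    (hmix.tendsto_pushPM_iterate hφ hρ) g.continuous).congr fun t ↦ Subtype.ext ?_
  exact (Measure.map_iterate_eq_of_semiconj hφ g.continuous.measurable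
    g.symm.continuous.measurable g.apply_symm_apply hconj ν t).symm

section PseudoDist

variable {α ι : Type*} [TopologicalSpace α] {d : α → α → ℝ}

theorem tendsto_zero_of_isOpen_iff_ball
    (hsymm : ∀ a b, d a b = d b a) (htri : ∀ a b c, d a c ≤ d a b + d b c)
    (hself : ∀ a, d a a = 0)
    (htop : ∀ s : Set α, IsOpen s ↔ ∀ a ∈ s, ∃ ε > (0 : ℝ), ∀ b, d a b < ε → b ∈ s)
    {l : Filter ι} {u : ι → α} {a : α}
    (hu : Tendsto u l (𝓝 a)) : Tendsto (fun i ↦ d a (u i)) l (𝓝 0) := by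
  have hnonneg : ∀ b, 0 ≤ d a b := fun b ↦ by linarith [htri a b a, hsymm a b, hself a]
  refine tendsto_order.2 ⟨fun c hc ↦ .of_forall fun i ↦ hc.trans_le (hnonneg _), fun ε hε ↦ ?_⟩
  have hball : IsOpen {b | d a b < ε} := (htop _).2 fun b hb ↦
    ⟨ε - d a b, sub_pos.2 hb, fun c hc ↦ show d a c < ε by
      linarith [htri a b c, show d a b < ε from hb]⟩
  exact hu (hball.mem_nhds (by simpa [hself] using hε))

theorem limsup_le_of_isOpen_iff_ball
    (hsymm : ∀ a b, d a b = d b a) (htri : ∀ a b c, d a c ≤ d a b + d b c)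
    (hself : ∀ a, d a a = 0)
    (htop : ∀ s : Set α, IsOpen s ↔ ∀ a ∈ s, ∃ ε > (0 : ℝ), ∀ b, d a b < ε → b ∈ s)
    {l : Filter ι} [l.NeBot] {u v : ι → α} {a b : α}
    (hu : Tendsto u l (𝓝 a)) (hv : Tendsto v l (𝓝 b)) :
    limsup (fun i ↦ d (u i) (v i)) l ≤ d a b := by
  have hbound : Tendsto (fun i ↦ d a (u i) + (d a b + d b (v i))) l (𝓝 (0 + (d a b + 0))) :=
    (tendsto_zero_of_isOpen_iff_ball hsymm htri hself htop hu).add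
      (tendsto_const_nhds.add (tendsto_zero_of_isOpen_iff_ball hsymm htri hself htop hv))
  have hle : ∀ i, d (u i) (v i) ≤ d a (u i) + (d a b + d b (v i)) := fun i ↦ by
    linarith [htri (u i) a (v i), htri a b (v i), hsymm a (u i)]
  have hnonneg : ∀ i, 0 ≤ d (u i) (v i) := fun i ↦ by
    linarith [htri (u i) (v i) (u i), hsymm (u i) (v i), hself (u i)]
  simpa using (limsup_le_limsup (.of_forall hle) (isCoboundedUnder_le_of_le l hnonneg)
    hbound.isBoundedUnder_le).trans hbound.limsup_eq.le

end PseudoDist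

theorem statement5_general {X : Type*} [MetricSpace X]
    [MeasurableSpace X] [BorelSpace X]
    (φ φh g : X ≃ₜ X) (hconj : ∀ x, g (φ x) = φh (g x))
    -- `dP` is a metric on `P(X)` metrizing the weak topology:
    (dP : ProbabilityMeasure X → ProbabilityMeasure X → ℝ)
    (hdP_symm : ∀ a b, dP a b = dP b a)
    (hdP_tri : ∀ a b c, dP a c ≤ dP a b + dP b c)
    (hdP_eq : ∀ a b, dP a b = 0 ↔ a = b)
    (hdP_top : ∀ s : Set (ProbabilityMeasure X),
      IsOpen s ↔ ∀ a ∈ s, ∃ ε > (0 : ℝ), ∀ b, dP a b < ε → b ∈ s)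
    (μ ν : ProbabilityMeasure X)
    (hmix : IsMixingM ⇑φ (μ : Measure X))
    (habs : (ν : Measure X) ≪ (μ : Measure X))
    (hns : (μ : Measure X).map ⇑g.symm ≪ (μ : Measure X)) :
    Filter.limsup
      (fun t : ℕ => dP
        (pushPM (⇑φ)^[t] (φ.continuous.measurable.iterate t) ν)
        (pushPM (⇑φh)^[t] (φh.continuous.measurable.iterate t) ν))
      atTop
      ≤ dP μ (pushPM ⇑g g.continuous.measurable μ) :=
  limsup_le_of_isOpen_iff_ball hdP_symm hdP_tri (fun a ↦ (hdP_eq a a).2 rfl) hdP_top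
    (hmix.tendsto_pushPM_iterate φ.continuous.measurable habs)
    (hmix.tendsto_pushPM_iterate_of_semiconj φ.continuous.measurable φh.continuous.measurable
      hconj habs hns)

/-- For conjugate homeomorphisms `φ, φ̂` of a compact metric space, `μ` mixing
for `φ`, `ν ≪ μ`, and `g⁻¹` nonsingular w.r.t. `μ`,
`limsup_{t→∞} d_P(φ^t_*ν, φ̂^t_*ν) ≤ d_P(μ, g_*μ)`. -/
theorem statement5 {X : Type*} [MetricSpace X] [CompactSpace X]
    [MeasurableSpace X] [BorelSpace X]
    (φ φh g : X ≃ₜ X) (hconj : ∀ x, g (φ x) = φh (g x))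
    -- `dP` is a metric on `P(X)` metrizing the weak topology:
    (dP : ProbabilityMeasure X → ProbabilityMeasure X → ℝ)
    (hdP_symm : ∀ a b, dP a b = dP b a)
    (hdP_tri : ∀ a b c, dP a c ≤ dP a b + dP b c)
    (hdP_eq : ∀ a b, dP a b = 0 ↔ a = b)
    (hdP_top : ∀ s : Set (ProbabilityMeasure X),
      IsOpen s ↔ ∀ a ∈ s, ∃ ε > (0 : ℝ), ∀ b, dP a b < ε → b ∈ s)
    (μ ν : ProbabilityMeasure X)
    (hmix : IsMixingM ⇑φ (μ : Measure X))
    (habs : (ν : Measure X) ≪ (μ : Measure X))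
    (hns : (μ : Measure X).map ⇑g.symm ≪ (μ : Measure X)) :
    Filter.limsup
      (fun t : ℕ => dP
        (pushPM (⇑φ)^[t] (φ.continuous.measurable.iterate t) ν)
        (pushPM (⇑φh)^[t] (φh.continuous.measurable.iterate t) ν))
      atTop
      ≤ dP μ (pushPM ⇑g g.continuous.measurable μ) :=
  statement5_general φ φh g hconj dP hdP_symm hdP_tri hdP_eq hdP_top μ ν hmix habs hns

end
end

section
/- Let X be a smooth compact manifold with metric d and let φ, φ̂ ∈ Diff¹(X) be topologically conjugate by a homeomorphism g : X → X, i.e. g ∘ φ = φ̂ ∘ g. Fix a locally finite Borel reference measure ℓ on X. Let μ be an attracting measure for φ with respect to ℓ, with open neighbourhood U of its support, and let ν be a Borel probability measure absolutely continuous with respect to ℓ with ν(U ∩ g(U)) = 1. Suppose φ, g and g⁻¹ are nonsingular with respect to ℓ. Then limsup_{t→∞} d_P(φ^t_*ν, φ̂^t_*ν) ≤ d_P(μ, g_*μ). -/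
/-! Pull `ν` back by the conjugacy: `ν' = g⁻¹_* ν` is still absolutely continuous and concentrated
on `U`, so `φ^t_* ν' → μ`. Conjugacy gives `φ̂^t_* ν = g_* (φ^t_* ν')`, hence `φ̂^t_* ν → g_* μ`,
while `φ^t_* ν → μ`. Since `d_P` metrizes the weak topology it is continuous, so
`d_P(φ^t_* ν, φ̂^t_* ν)` in fact converges to `d_P(μ, g_* μ)`. -/

open MeasureTheory Filter Topology ENNReal

noncomputable section

section PushForward

variable {α β γ : Type*} [MeasurableSpace α] [MeasurableSpace β] [MeasurableSpace γ]

lemma pushPM_pushPM {f : α → β} {g : β → γ} (hf : Measurable f) (hg : Measurable g)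
    (ν : ProbabilityMeasure α) :
    pushPM g hg (pushPM f hf ν) = pushPM (g ∘ f) (hg.comp hf) ν :=
  Subtype.ext (Measure.map_map hg hf)

lemma pushPM_congr {f f' : α → β} (hf : Measurable f) (hf' : Measurable f') (h : f = f')
    (ν : ProbabilityMeasure α) : pushPM f hf ν = pushPM f' hf' ν := by
  subst h; rfl

lemma pushPM_eq_of_semiconj {f : α → α} {f' : β → β} {g : α → β} {g' : β → α}
    (hf : Measurable f) (hf' : Measurable f') (hg : Measurable g) (hg' : Measurable g')
    (hconj : Function.Semiconj g f f') (hinv : Function.RightInverse g' g)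
    (ν : ProbabilityMeasure β) :
    pushPM f' hf' ν = pushPM g hg (pushPM f hf (pushPM g' hg' ν)) := by
  rw [pushPM_pushPM, pushPM_pushPM]
  refine pushPM_congr _ _ (funext fun y => ?_) ν
  simp only [Function.comp_apply, hconj (g' y), hinv y]

lemma pushPM_absolutelyContinuous {f : α → β} (hf : Measurable f) {ν : ProbabilityMeasure α}
    {ℓ : Measure α} {ℓ' : Measure β} (hν : (ν : Measure α) ≪ ℓ) (hns : ℓ.map f ≪ ℓ') :
    (pushPM f hf ν : Measure β) ≪ ℓ' :=
  (hν.map hf).trans hns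

end PushForward

lemma pushPM_homeomorph_symm_apply {X Y : Type*} [TopologicalSpace X] [MeasurableSpace X]
    [BorelSpace X] [TopologicalSpace Y] [MeasurableSpace Y] [BorelSpace Y] (g : X ≃ₜ Y)
    (ν : ProbabilityMeasure Y) (s : Set X) :
    (pushPM g.symm g.symm.continuous.measurable ν : Measure X) s = (ν : Measure Y) (g '' s) := by
  rw [g.image_eq_preimage_symm]
  exact g.symm.measurableEmbedding.map_apply _ s

lemma tendsto_pushPM {X Y : Type*} [TopologicalSpace X] [MeasurableSpace X]
    [OpensMeasurableSpace X] [TopologicalSpace Y] [MeasurableSpace Y] [BorelSpace Y]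
    {ι : Type*} {L : Filter ι} {f : X → Y} (hf : Continuous f) {νs : ι → ProbabilityMeasure X}
    {ν : ProbabilityMeasure X} (h : Tendsto νs L (𝓝 ν)) :
    Tendsto (fun i => pushPM f hf.measurable (νs i)) L (𝓝 (pushPM f hf.measurable ν)) :=
  ProbabilityMeasure.tendsto_map_of_tendsto_of_continuous νs ν h hf

lemma tendsto_dist_of_isOpen_iff {α ι : Type*} [TopologicalSpace α] (d : α → α → ℝ)
    (d_self : ∀ a, d a a = 0) (d_comm : ∀ a b, d a b = d b a)
    (d_tri : ∀ a b c, d a c ≤ d a b + d b c)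
    (hd : ∀ s : Set α, IsOpen s ↔ ∀ a ∈ s, ∃ ε > (0 : ℝ), ∀ b, d a b < ε → b ∈ s)
    {L : Filter ι} {u v : ι → α} {a b : α} (hu : Tendsto u L (𝓝 a)) (hv : Tendsto v L (𝓝 b)) :
    Tendsto (fun i => d (u i) (v i)) L (𝓝 (d a b)) := by
  let := PseudoMetricSpace.ofDistTopology d d_self d_comm d_tri hd
  exact hu.dist hv

lemma measure_eq_one_of_subset {α : Type*} [MeasurableSpace α] {ν : Measure α}
    [IsProbabilityMeasure ν] {s t : Set α} (hst : s ⊆ t) (hs : ν s = 1) : ν t = 1 :=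
  le_antisymm prob_le_one (hs ▸ measure_mono hst)

theorem statement6_general
    {X : Type*} [MetricSpace X] [MeasurableSpace X] [BorelSpace X]
    -- `φ, φ̂ ∈ Diff¹(X)`, conjugate by the homeomorphism `g`:
    (φ φh g : X ≃ₜ X)
    (hconj : ∀ x, g (φ x) = φh (g x))
    -- `dP` is a metric on `P(X)` metrizing the weak topology:
    (dP : ProbabilityMeasure X → ProbabilityMeasure X → ℝ)
    (hdP_symm : ∀ a b, dP a b = dP b a)
    (hdP_tri : ∀ a b c, dP a c ≤ dP a b + dP b c)
    (hdP_eq : ∀ a b, dP a b = 0 ↔ a = b)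
    (hdP_top : ∀ s : Set (ProbabilityMeasure X),
      IsOpen s ↔ ∀ a ∈ s, ∃ ε > (0 : ℝ), ∀ b, dP a b < ε → b ∈ s)
    -- locally finite Borel reference measure:
    (ℓ : Measure X)
    -- `μ` is an attracting measure for `φ`, with open neighbourhood `U` of its support:
    (μ : ProbabilityMeasure X) (U : Set X)
    (hattr : ∀ ν' : ProbabilityMeasure X, (ν' : Measure X) ≪ ℓ → (ν' : Measure X) U = 1 →
      Tendsto (fun t : ℕ => pushPM (⇑φ)^[t] (φ.continuous.measurable.iterate t) ν')
        atTop (𝓝 μ))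
    -- `ν ≪ ℓ` with `ν(U ∩ g(U)) = 1`:
    (ν : ProbabilityMeasure X)
    (hν : (ν : Measure X) ≪ ℓ) (hνU : (ν : Measure X) (U ∩ ⇑g '' U) = 1)
    -- `φ`, `g` and `g⁻¹` are nonsingular w.r.t. `ℓ`:
    (hnsginv : ℓ.map ⇑g.symm ≪ ℓ) :
    Filter.limsup
      (fun t : ℕ => dP
        (pushPM (⇑φ)^[t] (φ.continuous.measurable.iterate t) ν)
        (pushPM (⇑φh)^[t] (φh.continuous.measurable.iterate t) ν))
      atTop
      ≤ dP μ (pushPM ⇑g g.continuous.measurable μ) := by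
  set ν' := pushPM g.symm g.symm.continuous.measurable ν
  have hν'ac : (ν' : Measure X) ≪ ℓ := pushPM_absolutelyContinuous _ hν hnsginv
  have hν'U : (ν' : Measure X) U = 1 := by
    rw [pushPM_homeomorph_symm_apply]
    exact measure_eq_one_of_subset Set.inter_subset_right hνU
  have hφν : Tendsto (fun t : ℕ => pushPM (⇑φ)^[t] (φ.continuous.measurable.iterate t) ν)
      atTop (𝓝 μ) :=
    hattr ν hν (measure_eq_one_of_subset Set.inter_subset_left hνU)
  have hφhν : Tendsto (fun t : ℕ => pushPM (⇑φh)^[t] (φh.continuous.measurable.iterate t) ν)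
      atTop (𝓝 (pushPM g g.continuous.measurable μ)) := by
    have hconj_iter (t : ℕ) := pushPM_eq_of_semiconj (φ.continuous.measurable.iterate t)
      (φh.continuous.measurable.iterate t) g.continuous.measurable g.symm.continuous.measurable
      (Function.Semiconj.iterate_right hconj t) g.apply_symm_apply ν
    simp only [hconj_iter]
    exact tendsto_pushPM g.continuous (hattr ν' hν'ac hν'U)
  exact (tendsto_dist_of_isOpen_iff dP (fun a => (hdP_eq a a).2 rfl) hdP_symm hdP_tri hdP_top
    hφν hφhν).limsup_eq.le

/-- For topologically conjugate `C¹` diffeomorphisms `φ, φ̂` of a smooth compact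
manifold, `μ` an attracting measure for `φ` (w.r.t. the locally finite reference measure `ℓ`, with
open neighbourhood `U` of its support), and `ν ≪ ℓ` with `ν(U ∩ g(U)) = 1`,
`limsup_{t→∞} d_P(φ^t_*ν, φ̂^t_*ν) ≤ d_P(μ, g_*μ)`. -/
theorem statement6 {E : Type*} [NormedAddCommGroup E] [NormedSpace ℝ E]
    {H : Type*} [TopologicalSpace H] (I : ModelWithCorners ℝ E H)
    {X : Type*} [MetricSpace X] [CompactSpace X] [ChartedSpace H X]
    [IsManifold I (⊤ : ℕ∞) X] [MeasurableSpace X] [BorelSpace X]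
    -- `φ, φ̂ ∈ Diff¹(X)`, conjugate by the homeomorphism `g`:
    (φ φh g : X ≃ₜ X)
    (hφ : ContMDiff I I 1 ⇑φ) (hφinv : ContMDiff I I 1 ⇑φ.symm)
    (hφh : ContMDiff I I 1 ⇑φh) (hφhinv : ContMDiff I I 1 ⇑φh.symm)
    (hconj : ∀ x, g (φ x) = φh (g x))
    -- `dP` is a metric on `P(X)` metrizing the weak topology:
    (dP : ProbabilityMeasure X → ProbabilityMeasure X → ℝ)
    (hdP_symm : ∀ a b, dP a b = dP b a)
    (hdP_tri : ∀ a b c, dP a c ≤ dP a b + dP b c)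
    (hdP_eq : ∀ a b, dP a b = 0 ↔ a = b)
    (hdP_top : ∀ s : Set (ProbabilityMeasure X),
      IsOpen s ↔ ∀ a ∈ s, ∃ ε > (0 : ℝ), ∀ b, dP a b < ε → b ∈ s)
    -- locally finite Borel reference measure:
    (ℓ : Measure X) [IsLocallyFiniteMeasure ℓ]
    -- `μ` is an attracting measure for `φ`, with open neighbourhood `U` of its support:
    (μ : ProbabilityMeasure X) (U : Set X)
    (hUopen : IsOpen U) (hUsupp : msupport (μ : Measure X) ⊆ U)
    (hcompact : IsCompact (msupport (μ : Measure X)))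
    (hattr : ∀ ν' : ProbabilityMeasure X, (ν' : Measure X) ≪ ℓ → (ν' : Measure X) U = 1 →
      Tendsto (fun t : ℕ => pushPM (⇑φ)^[t] (φ.continuous.measurable.iterate t) ν')
        atTop (𝓝 μ))
    -- `ν ≪ ℓ` with `ν(U ∩ g(U)) = 1`:
    (ν : ProbabilityMeasure X)
    (hν : (ν : Measure X) ≪ ℓ) (hνU : (ν : Measure X) (U ∩ ⇑g '' U) = 1)
    -- `φ`, `g` and `g⁻¹` are nonsingular w.r.t. `ℓ`:
    (hnsφ : ℓ.map ⇑φ ≪ ℓ) (hnsg : ℓ.map ⇑g ≪ ℓ) (hnsginv : ℓ.map ⇑g.symm ≪ ℓ) :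
    Filter.limsup
      (fun t : ℕ => dP
        (pushPM (⇑φ)^[t] (φ.continuous.measurable.iterate t) ν)
        (pushPM (⇑φh)^[t] (φh.continuous.measurable.iterate t) ν))
      atTop
      ≤ dP μ (pushPM ⇑g g.continuous.measurable μ) :=
  statement6_general φ φh g hconj dP hdP_symm hdP_tri hdP_eq hdP_top ℓ μ U hattr ν hν hνU hnsginv

end
end
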